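/- Under the stated setup, let Λ = {λ ∈ ℝ^n : Z_λ finite}, and suppose λ* ∈ Λ is a maximum likelihood estimate, i.e. L(λ*) ≥ L(λ) for all λ ∈ Λ. Suppose for every λ ∈ Λ there is a global maximizer γ̂(λ) of γ ↦ A(γ, λ) with Z_{γ̂(λ)+λ} finite, defining M(λ) = γ̂(λ) + λ. Then λ* is a fixed point of M, i.e. γ = 0 maximizes γ ↦ A(γ, λ*). -/

import Mathlib

/-!
Fix `λ` with `Z_λ` finite and `γ` with `Z_{γ+λ}` finite. For each observation `y`, Jensen's
inequality for `exp` under `k_λ` gives `k_λ[γ·ν] ≤ ln k_λ[e^{γ·ν}]`, and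
`ln k_λ[e^{γ·ν}] = ln p_{γ+λ}(y) - ln p_λ(y) + ln (Z_{γ+λ} / Z_λ)`. On the other hand
`ln (Z_{γ+λ} / Z_λ) ≤ Z_{γ+λ} / Z_λ - 1 = p_λ[e^{γ·ν}] - 1 ≤ p_λ[∑ ν̄_i e^{γ_i ν_#}] - 1`,
the last step by Jensen with the weights `ν̄_i`. Summing over `𝒴`,
`A(γ, λ) ≤ L(γ + λ) - L(λ)`, while `A(0, λ) = 0`. At the MLE `λ*` the maximizer `γ̂` thus gives
`A(γ, λ*) ≤ A(γ̂, λ*) ≤ L(γ̂ + λ*) - L(λ*) ≤ 0 = A(0, λ*)`.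
-/

/- Common setup: log-linear models over proof trees (complete data X) and
   queries (incomplete data Y). -/

variable {X Y : Type*}

/-- `ν_#(x) = ∑ i, ν_i(x)`. -/
def nuSharp {n : ℕ} (ν : Fin n → X → ℕ) (x : X) : ℕ := ∑ i, ν i x

/-- weighted property sum `λ·ν(x)`. -/
noncomputable def wdot {n : ℕ} (l : Fin n → ℝ) (ν : Fin n → X → ℕ) (x : X) : ℝ :=
  ∑ i, l i * (ν i x : ℝ)

/-- normalizing constant `Z_λ`. -/
noncomputable def Zpart (p0 : X → ℝ) {n : ℕ} (ν : Fin n → X → ℕ) (l : Fin n → ℝ) : ℝ :=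
  ∑' x : X, Real.exp (wdot l ν x) * p0 x

/-- log-linear distribution `p_λ(x)`. -/
noncomputable def pLL (p0 : X → ℝ) {n : ℕ} (ν : Fin n → X → ℕ) (l : Fin n → ℝ) (x : X) : ℝ :=
  (Zpart p0 ν l)⁻¹ * Real.exp (wdot l ν x) * p0 x

/-- incomplete-data probability `p_λ(y) = ∑_{x ∈ X(y)} p_λ(x)`. -/
noncomputable def pLLY (Yf : X → Y) (p0 : X → ℝ) {n : ℕ} (ν : Fin n → X → ℕ)
    (l : Fin n → ℝ) (y : Y) : ℝ :=
  ∑' x : {x : X // Yf x = y}, pLL p0 ν l x.1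

/-- incomplete-data log-likelihood `L(λ) = ∑_{y ∈ 𝒴} ln p_λ(y)`. -/
noncomputable def LL (Yf : X → Y) (p0 : X → ℝ) {n : ℕ} (ν : Fin n → X → ℕ)
    (𝒴 : Multiset Y) (l : Fin n → ℝ) : ℝ :=
  (𝒴.map fun y => Real.log (pLLY Yf p0 ν l y)).sum

/-- expectation `p_λ[f]`. -/
noncomputable def pExp (p0 : X → ℝ) {n : ℕ} (ν : Fin n → X → ℕ) (l : Fin n → ℝ)
    (f : X → ℝ) : ℝ :=
  ∑' x : X, pLL p0 ν l x * f x

/-- conditional expectation `k_λ[f]` given observed `y`. -/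
noncomputable def kExp (Yf : X → Y) (p0 : X → ℝ) {n : ℕ} (ν : Fin n → X → ℕ)
    (l : Fin n → ℝ) (y : Y) (f : X → ℝ) : ℝ :=
  ∑' x : {x : X // Yf x = y}, (pLL p0 ν l x.1 / pLLY Yf p0 ν l y) * f x.1

/-- auxiliary function
`A(γ,λ) = ∑_{y∈𝒴} (1 + k_λ[γ·ν] − p_λ[∑ i, ν̄_i e^{γ_i ν_#}])`. -/
noncomputable def Aaux (Yf : X → Y) (p0 : X → ℝ) {n : ℕ} (ν : Fin n → X → ℕ)
    (𝒴 : Multiset Y) (γ l : Fin n → ℝ) : ℝ :=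
  (𝒴.map fun y =>
    1 + kExp Yf p0 ν l y (fun x => wdot γ ν x)
      - pExp p0 ν l (fun x =>
          ∑ i, ((ν i x : ℝ) / (nuSharp ν x : ℝ)) * Real.exp (γ i * (nuSharp ν x : ℝ)))).sum


theorem Real.exp_tsum_mul_le_tsum_mul_exp {ι : Type*} {w f : ι → ℝ} (hw : ∀ i, 0 ≤ w i)
    (hw1 : ∑' i, w i = 1) (hwf : Summable fun i => w i * f i)
    (hwe : Summable fun i => w i * Real.exp (f i)) :
    Real.exp (∑' i, w i * f i) ≤ ∑' i, w i * Real.exp (f i) := by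
  have hws : Summable w := by
    by_contra h
    simp [tsum_eq_zero_of_not_summable h] at hw1
  set K := ∑' i, w i * f i
  have tangent (t : ℝ) : Real.exp K * (1 + (t - K)) ≤ Real.exp t := by
    have := mul_le_mul_of_nonneg_left (Real.add_one_le_exp (t - K)) (Real.exp_pos K).le
    rwa [← Real.exp_add, add_sub_cancel, add_comm (t - K)] at this
  have hlin : Summable fun i => w i + w i * f i - K * w i := (hws.add hwf).sub (hws.mul_left K)
  calc Real.exp K = ∑' i, Real.exp K * (w i + w i * f i - K * w i) := by
        rw [tsum_mul_left, (hws.add hwf).tsum_sub (hws.mul_left K), hws.tsum_add hwf,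
          tsum_mul_left, hw1]
        ring
    _ ≤ ∑' i, w i * Real.exp (f i) := by
        refine (hlin.mul_left _).tsum_le_tsum (fun i => ?_) hwe
        calc Real.exp K * (w i + w i * f i - K * w i)
            = w i * (Real.exp K * (1 + (f i - K))) := by ring
          _ ≤ w i * Real.exp (f i) := mul_le_mul_of_nonneg_left (tangent _) (hw i)

section LogLinear

variable {n : ℕ} {p0 : X → ℝ} {ν : Fin n → X → ℕ}

lemma wdot_add (γ l : Fin n → ℝ) (x : X) : wdot (γ + l) ν x = wdot γ ν x + wdot l ν x := by
  simp [wdot, add_mul, Finset.sum_add_distrib]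

lemma sum_nu_div_nuSharp {x : X} (hx : 1 ≤ nuSharp ν x) :
    ∑ i, (ν i x : ℝ) / (nuSharp ν x : ℝ) = 1 := by
  have hpos : (0 : ℝ) < nuSharp ν x := by exact_mod_cast hx
  rw [← Finset.sum_div, div_eq_one_iff_eq hpos.ne']
  simp [nuSharp]

lemma exp_wdot_le (γ : Fin n → ℝ) {x : X} (hx : 1 ≤ nuSharp ν x) :
    Real.exp (wdot γ ν x) ≤
      ∑ i, ((ν i x : ℝ) / (nuSharp ν x : ℝ)) * Real.exp (γ i * (nuSharp ν x : ℝ)) := by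
  have hpos : (0 : ℝ) < nuSharp ν x := by exact_mod_cast hx
  have hmean : ∑ i, ((ν i x : ℝ) / (nuSharp ν x : ℝ)) * (γ i * (nuSharp ν x : ℝ)) =
      wdot γ ν x :=
    Finset.sum_congr rfl fun i _ => by field_simp
  simpa only [smul_eq_mul, hmean] using convexOn_exp.map_sum_le (t := Finset.univ)
    (p := fun i => γ i * (nuSharp ν x : ℝ)) (fun i _ => by positivity) (sum_nu_div_nuSharp hx)
    (fun i _ => Set.mem_univ _)

variable {l : Fin n → ℝ}

lemma pLL_mul_exp_wdot (γ : Fin n → ℝ) (x : X) :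
    pLL p0 ν l x * Real.exp (wdot γ ν x) =
      (Zpart p0 ν l)⁻¹ * (Real.exp (wdot (γ + l) ν x) * p0 x) := by
  rw [pLL, wdot_add, Real.exp_add]
  ring

lemma tsum_pLL_mul_exp_wdot (γ : Fin n → ℝ) :
    ∑' x, pLL p0 ν l x * Real.exp (wdot γ ν x) = Zpart p0 ν (γ + l) / Zpart p0 ν l := by
  simp_rw [pLL_mul_exp_wdot, tsum_mul_left, Zpart, inv_mul_eq_div]

lemma pLL_add (hZl : Zpart p0 ν l ≠ 0) (γ : Fin n → ℝ) (x : X) :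
    pLL p0 ν (γ + l) x =
      Zpart p0 ν l / Zpart p0 ν (γ + l) * (pLL p0 ν l x * Real.exp (wdot γ ν x)) := by
  rw [pLL_mul_exp_wdot, pLL]
  field_simp

lemma pLL_nonneg (hp0 : ∀ x, 0 ≤ p0 x) (x : X) : 0 ≤ pLL p0 ν l x := by
  have hZ : 0 ≤ Zpart p0 ν l := tsum_nonneg fun x => mul_nonneg (Real.exp_pos _).le (hp0 x)
  have := hp0 x
  unfold pLL
  positivity

variable (hp0 : ∀ x, 0 < p0 x) (hZ : Summable fun x : X => Real.exp (wdot l ν x) * p0 x)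
include hp0 hZ

lemma Zpart_pos [Nonempty X] : 0 < Zpart p0 ν l :=
  hZ.tsum_pos (fun x => (mul_pos (Real.exp_pos _) (hp0 x)).le) (Classical.arbitrary X)
    (mul_pos (Real.exp_pos _) (hp0 _))

lemma tsum_pLL [Nonempty X] : ∑' x, pLL p0 ν l x = 1 := by
  simp_rw [pLL, mul_assoc]
  rw [tsum_mul_left]
  exact inv_mul_cancel₀ (Zpart_pos hp0 hZ).ne'

lemma log_Zpart_add_sub_log_Zpart_le [Nonempty X] (hν : ∀ x, 1 ≤ nuSharp ν x) (γ : Fin n → ℝ)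
    (hZ' : Summable fun x : X => Real.exp (wdot (γ + l) ν x) * p0 x)
    (hp : Summable fun x : X => pLL p0 ν l x *
      ∑ i, ((ν i x : ℝ) / (nuSharp ν x : ℝ)) * Real.exp (γ i * (nuSharp ν x : ℝ))) :
    Real.log (Zpart p0 ν (γ + l)) - Real.log (Zpart p0 ν l) ≤
      pExp p0 ν l (fun x =>
        ∑ i, ((ν i x : ℝ) / (nuSharp ν x : ℝ)) * Real.exp (γ i * (nuSharp ν x : ℝ))) - 1 := by
  have hZpos := Zpart_pos hp0 hZ
  have hZ'pos := Zpart_pos hp0 hZ'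
  have hratio : Zpart p0 ν (γ + l) / Zpart p0 ν l ≤ pExp p0 ν l (fun x =>
      ∑ i, ((ν i x : ℝ) / (nuSharp ν x : ℝ)) * Real.exp (γ i * (nuSharp ν x : ℝ))) := by
    rw [← tsum_pLL_mul_exp_wdot, pExp]
    refine ((hZ'.mul_left _).congr fun x => (pLL_mul_exp_wdot γ x).symm).tsum_le_tsum
      (fun x => ?_) hp
    exact mul_le_mul_of_nonneg_left (exp_wdot_le γ (hν x)) (pLL_nonneg (fun x => (hp0 x).le) x)
  have hlog := Real.log_le_sub_one_of_pos (div_pos hZ'pos hZpos)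
  rw [Real.log_div hZ'pos.ne' hZpos.ne'] at hlog
  linarith

lemma kExp_wdot_le_log_sub [Nonempty X] (Yf : X → Y) (γ : Fin n → ℝ) {y : Y}
    (hZ' : Summable fun x : X => Real.exp (wdot (γ + l) ν x) * p0 x)
    (hy : 0 < pLLY Yf p0 ν l y)
    (hk : Summable fun x : {x : X // Yf x = y} =>
      (pLL p0 ν l x.1 / pLLY Yf p0 ν l y) * wdot γ ν x.1) :
    kExp Yf p0 ν l y (fun x => wdot γ ν x) ≤
      Real.log (pLLY Yf p0 ν (γ + l) y) - Real.log (pLLY Yf p0 ν l y) +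
        (Real.log (Zpart p0 ν (γ + l)) - Real.log (Zpart p0 ν l)) := by
  set P := pLLY Yf p0 ν l y
  set Z := Zpart p0 ν l
  set Z' := Zpart p0 ν (γ + l)
  have hZpos : 0 < Z := Zpart_pos hp0 hZ
  have hZ'pos : 0 < Z' := Zpart_pos hp0 hZ'
  set T := ∑' x : {x : X // Yf x = y}, pLL p0 ν l x.1 * Real.exp (wdot γ ν x.1)
  have hjensen : Real.exp (kExp Yf p0 ν l y fun x => wdot γ ν x) ≤ T / P := by
    have hT : T / P =
        ∑' x : {x : X // Yf x = y}, pLL p0 ν l x.1 / P * Real.exp (wdot γ ν x.1) := by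
      rw [← tsum_div_const]
      exact tsum_congr fun x => (div_mul_eq_mul_div _ _ _).symm
    have hexp : Summable fun x => pLL p0 ν l x * Real.exp (wdot γ ν x) :=
      (hZ'.mul_left Z⁻¹).congr fun x => (pLL_mul_exp_wdot γ x).symm
    rw [hT]
    refine Real.exp_tsum_mul_le_tsum_mul_exp
      (fun x => div_nonneg (pLL_nonneg (fun x => (hp0 x).le) x.1) hy.le) ?_ hk ?_
    · rw [tsum_div_const]
      exact div_self hy.ne'
    · exact ((hexp.subtype {x | Yf x = y}).div_const P).congr
        fun x => (div_mul_eq_mul_div _ _ _).symm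
  have hTpos : 0 < T := (div_pos_iff_of_pos_right hy).mp ((Real.exp_pos _).trans_le hjensen)
  have hkExp : kExp Yf p0 ν l y (fun x => wdot γ ν x) ≤ Real.log T - Real.log P := by
    rw [← Real.log_div hTpos.ne' hy.ne']
    exact (Real.le_log_iff_exp_le (div_pos hTpos hy)).mpr hjensen
  have hy' : pLLY Yf p0 ν (γ + l) y = Z / Z' * T := by
    simp_rw [pLLY, pLL_add hZpos.ne', tsum_mul_left]
    rfl
  rw [hy', Real.log_mul (div_pos hZpos hZ'pos).ne' hTpos.ne', Real.log_div hZpos.ne' hZ'pos.ne']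
  linarith

lemma one_add_kExp_sub_pExp_le_log_sub [Nonempty X] (Yf : X → Y)
    (hν : ∀ x, 1 ≤ nuSharp ν x) (γ : Fin n → ℝ) {y : Y}
    (hZ' : Summable fun x : X => Real.exp (wdot (γ + l) ν x) * p0 x)
    (hy : 0 < pLLY Yf p0 ν l y)
    (hk : Summable fun x : {x : X // Yf x = y} =>
      (pLL p0 ν l x.1 / pLLY Yf p0 ν l y) * wdot γ ν x.1)
    (hp : Summable fun x : X => pLL p0 ν l x *
      ∑ i, ((ν i x : ℝ) / (nuSharp ν x : ℝ)) * Real.exp (γ i * (nuSharp ν x : ℝ))) :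
    1 + kExp Yf p0 ν l y (fun x => wdot γ ν x)
        - pExp p0 ν l (fun x =>
          ∑ i, ((ν i x : ℝ) / (nuSharp ν x : ℝ)) * Real.exp (γ i * (nuSharp ν x : ℝ))) ≤
      Real.log (pLLY Yf p0 ν (γ + l) y) - Real.log (pLLY Yf p0 ν l y) := by
  linarith [log_Zpart_add_sub_log_Zpart_le hp0 hZ hν γ hZ' hp,
    kExp_wdot_le_log_sub hp0 hZ Yf γ hZ' hy hk]

lemma Aaux_le_LL_sub [Nonempty X] (Yf : X → Y) (hν : ∀ x, 1 ≤ nuSharp ν x) (𝒴 : Multiset Y)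
    (γ : Fin n → ℝ) (hZ' : Summable fun x : X => Real.exp (wdot (γ + l) ν x) * p0 x)
    (hpos : ∀ y ∈ 𝒴, 0 < pLLY Yf p0 ν l y)
    (hk : ∀ y ∈ 𝒴, Summable fun x : {x : X // Yf x = y} =>
      (pLL p0 ν l x.1 / pLLY Yf p0 ν l y) * wdot γ ν x.1)
    (hp : Summable fun x : X => pLL p0 ν l x *
      ∑ i, ((ν i x : ℝ) / (nuSharp ν x : ℝ)) * Real.exp (γ i * (nuSharp ν x : ℝ))) :
    Aaux Yf p0 ν 𝒴 γ l ≤ LL Yf p0 ν 𝒴 (γ + l) - LL Yf p0 ν 𝒴 l := by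
  rw [Aaux, LL, LL, ← Multiset.sum_map_sub]
  exact Multiset.sum_map_le_sum_map _ _ fun y hy =>
    one_add_kExp_sub_pExp_le_log_sub hp0 hZ Yf hν γ hZ' (hpos y hy) (hk y hy) hp

lemma Aaux_zero [Nonempty X] (Yf : X → Y) (hν : ∀ x, 1 ≤ nuSharp ν x) (𝒴 : Multiset Y) :
    Aaux Yf p0 ν 𝒴 0 l = 0 := by
  have hterm (y : Y) : 1 + kExp Yf p0 ν l y (fun x => wdot 0 ν x)
      - pExp p0 ν l (fun x =>
        ∑ i, ((ν i x : ℝ) / (nuSharp ν x : ℝ)) * Real.exp ((0 : Fin n → ℝ) i * nuSharp ν x))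
      = 0 := by
    have hk : kExp Yf p0 ν l y (fun x => wdot 0 ν x) = 0 := by simp [kExp, wdot]
    have hp : pExp p0 ν l (fun x =>
        ∑ i, ((ν i x : ℝ) / (nuSharp ν x : ℝ)) * Real.exp ((0 : Fin n → ℝ) i * nuSharp ν x))
        = 1 := by
      simp only [pExp, Pi.zero_apply, zero_mul, Real.exp_zero, mul_one,
        sum_nu_div_nuSharp (hν _)]
      exact tsum_pLL hp0 hZ
    rw [hk, hp]
    ring
  simp only [Aaux, hterm, Multiset.map_const', Multiset.sum_replicate, smul_zero]

end LogLinear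

theorem mle_is_fixed_point_general
    {X Y : Type*} (Yf : X → Y)
    (p0 : X → ℝ) (hp0 : ∀ x, 0 < p0 x) (hp0sum : ∑' x : X, p0 x = 1)
    {n : ℕ} (ν : Fin n → X → ℕ) (hν : ∀ x, 1 ≤ nuSharp ν x)
    (𝒴 : Multiset Y) (lstar : Fin n → ℝ)
    (hZstar : Summable fun x : X => Real.exp (wdot lstar ν x) * p0 x)
    (hpos : ∀ l : Fin n → ℝ, (Summable fun x : X => Real.exp (wdot l ν x) * p0 x) →
      ∀ y ∈ 𝒴, 0 < pLLY Yf p0 ν l y)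
    (hksum : ∀ l γ : Fin n → ℝ, ∀ y ∈ 𝒴, Summable fun x : {x : X // Yf x = y} =>
      (pLL p0 ν l x.1 / pLLY Yf p0 ν l y) * wdot γ ν x.1)
    (hpsum : ∀ l γ : Fin n → ℝ, Summable fun x : X => pLL p0 ν l x *
      ∑ i, ((ν i x : ℝ) / (nuSharp ν x : ℝ)) * Real.exp (γ i * (nuSharp ν x : ℝ)))
    (hMLE : ∀ l : Fin n → ℝ, (Summable fun x : X => Real.exp (wdot l ν x) * p0 x) →
      LL Yf p0 ν 𝒴 l ≤ LL Yf p0 ν 𝒴 lstar)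
    (hM : ∀ l : Fin n → ℝ, (Summable fun x : X => Real.exp (wdot l ν x) * p0 x) →
      ∃ γh : Fin n → ℝ,
        (∀ γ : Fin n → ℝ, Aaux Yf p0 ν 𝒴 γ l ≤ Aaux Yf p0 ν 𝒴 γh l) ∧
        (Summable fun x : X => Real.exp (wdot (γh + l) ν x) * p0 x)) :
    ∀ γ : Fin n → ℝ, Aaux Yf p0 ν 𝒴 γ lstar ≤ Aaux Yf p0 ν 𝒴 (0 : Fin n → ℝ) lstar := by
  intro γ
  have : Nonempty X := by
    by_contra hX
    rw [not_nonempty_iff] at hX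
    simp at hp0sum
  obtain ⟨γh, hγh, hZh⟩ := hM lstar hZstar
  calc Aaux Yf p0 ν 𝒴 γ lstar ≤ Aaux Yf p0 ν 𝒴 γh lstar := hγh γ
    _ ≤ LL Yf p0 ν 𝒴 (γh + lstar) - LL Yf p0 ν 𝒴 lstar :=
      Aaux_le_LL_sub hp0 hZstar Yf hν 𝒴 γh hZh (hpos lstar hZstar) (hksum lstar γh)
        (hpsum lstar γh)
    _ ≤ 0 := sub_nonpos.mpr (hMLE _ hZh)
    _ = Aaux Yf p0 ν 𝒴 0 lstar := (Aaux_zero hp0 hZstar Yf hν 𝒴).symm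

/-- Corollary 5: a maximum likelihood estimate `λ*` is a fixed point of the
iterative maximization map `M`, i.e. `γ = 0` maximizes `γ ↦ A(γ, λ*)`. -/
theorem mle_is_fixed_point
    {X Y : Type*} [Countable X] (Yf : X → Y)
    (p0 : X → ℝ) (hp0 : ∀ x, 0 < p0 x) (hp0sum : ∑' x : X, p0 x = 1)
    {n : ℕ} (ν : Fin n → X → ℕ) (hν : ∀ x, 1 ≤ nuSharp ν x)
    (𝒴 : Multiset Y) (lstar : Fin n → ℝ)
    (hZstar : Summable fun x : X => Real.exp (wdot lstar ν x) * p0 x)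
    (hpos : ∀ l : Fin n → ℝ, (Summable fun x : X => Real.exp (wdot l ν x) * p0 x) →
      ∀ y ∈ 𝒴, 0 < pLLY Yf p0 ν l y)
    (hksum : ∀ l γ : Fin n → ℝ, ∀ y ∈ 𝒴, Summable fun x : {x : X // Yf x = y} =>
      (pLL p0 ν l x.1 / pLLY Yf p0 ν l y) * wdot γ ν x.1)
    (hpsum : ∀ l γ : Fin n → ℝ, Summable fun x : X => pLL p0 ν l x *
      ∑ i, ((ν i x : ℝ) / (nuSharp ν x : ℝ)) * Real.exp (γ i * (nuSharp ν x : ℝ)))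
    (hMLE : ∀ l : Fin n → ℝ, (Summable fun x : X => Real.exp (wdot l ν x) * p0 x) →
      LL Yf p0 ν 𝒴 l ≤ LL Yf p0 ν 𝒴 lstar)
    (hM : ∀ l : Fin n → ℝ, (Summable fun x : X => Real.exp (wdot l ν x) * p0 x) →
      ∃ γh : Fin n → ℝ,
        (∀ γ : Fin n → ℝ, Aaux Yf p0 ν 𝒴 γ l ≤ Aaux Yf p0 ν 𝒴 γh l) ∧
        (Summable fun x : X => Real.exp (wdot (γh + l) ν x) * p0 x)) :
    ∀ γ : Fin n → ℝ, Aaux Yf p0 ν 𝒴 γ lstar ≤ Aaux Yf p0 ν 𝒴 (0 : Fin n → ℝ) lstar :=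
  mle_is_fixed_point_general Yf p0 hp0 hp0sum ν hν 𝒴 lstar hZstar hpos hksum hpsum hMLE hM
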